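/- For the unweighted RDO algorithm with ranks y ∈ [0,1]^V drawn independently and uniformly: if in the realized greedy matching a vertex u is matched (at the decision time of its matched edge) while vertex v is still unmatched at that time, then changing y_v to any value strictly greater than that decision time yields a run in which u has the same matching status (matched to the same partner). -/

import Mathlib

/-!
Only vertices acting no later than `y a` matter for the edge `(a, b)`: a run on `L` is the run
on the prefix `P` of vertices of rank `≤ y a` followed by a run on the rest, which keeps every
edge and only adds edges whose active vertex comes later. After the change of `y v`, the prefix
of rank `≤ y a` is `P` with `v` deleted. Since `v` is still unmatched after `P` is processed,
its turn in `P` did nothing (an acting vertex that finds a partner becomes matched), so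
deleting `v` from `P` does not change the run.
-/

/-- Whether vertex `x` is covered by the partial matching `M`. -/
def matchedIn {V : Type*} [DecidableEq V] (M : List (V × V)) (x : V) : Bool :=
  M.any fun e => e.1 = x || e.2 = x

/-- A run of the greedy matching process: vertices act in the given order; an unmatched
acting vertex `u` matches its most preferred unmatched neighbor (the first vertex of
`pref u` that is adjacent to `u` and unmatched), if one exists.  In each produced edge
the first component is the active vertex. -/
def rdoRun {V : Type*} [DecidableEq V] (adj : V → V → Bool) (pref : V → List V) :
    List V → List (V × V) → List (V × V)
  | [], M => M
  | u :: rest, M =>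
    if matchedIn M u then rdoRun adj pref rest M
    else
      match (pref u).find? (fun v => adj u v && !matchedIn M v) with
      | some v => rdoRun adj pref rest ((u, v) :: M)
      | none => rdoRun adj pref rest M

namespace List

open Function

variable {α β : Type*} [LinearOrder β] {f : α → β}

theorem Pairwise.filter_le_append_filter_lt {l : List α} (hl : l.Pairwise (f · < f ·)) (t : β) :
    l.filter (fun x => f x ≤ t) ++ l.filter (fun x => t < f x) = l := by
  induction l with
  | nil => rfl
  | cons x l ih =>
    obtain ⟨hx, hl⟩ := pairwise_cons.1 hl
    by_cases hxt : f x ≤ t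
    · simp [hxt, ih hl]
    · have hlow : l.filter (fun x => f x ≤ t) = [] :=
        filter_eq_nil_iff.2 fun z hz => by simpa using (lt_of_not_ge hxt).trans (hx z hz)
      have hhigh := ih hl
      rw [hlow, nil_append] at hhigh
      rw [filter_cons_of_neg (by simpa using hxt), hlow, nil_append,
        filter_cons_of_pos (by simpa using lt_of_not_ge hxt), hhigh]

theorem Pairwise.eq_of_mem_iff_of_lt {l₁ l₂ : List α} (h₁ : l₁.Pairwise (f · < f ·))
    (h₂ : l₂.Pairwise (f · < f ·)) (h : ∀ x, x ∈ l₁ ↔ x ∈ l₂) : l₁ = l₂ :=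
  haveI : Std.Irrefl (f · < f ·) := ⟨fun _ => lt_irrefl _⟩
  haveI : Std.Antisymm (f · < f ·) := ⟨fun _ _ hab hba => absurd hba hab.asymm⟩
  h₁.eq_of_mem_iff h₂ h

theorem Pairwise.filter_update_le_eq [DecidableEq α] {l l' : List α} {v : α} {s t : β}
    (hl : l.Pairwise (f · < f ·)) (hl' : l'.Pairwise (update f v t · < update f v t ·))
    (hst : s < t) (h : ∀ x, x ∈ l ↔ x ∈ l') :
    l'.filter (fun x => update f v t x ≤ s) = (l.filter (fun x => f x ≤ s)).filter (· ≠ v) := by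
  refine (hl'.filter _).eq_of_mem_iff_of_lt
    (((hl.filter _).filter _).imp_of_mem fun {c d} hc hd hcd => ?_) fun x => ?_
  · simp only [mem_filter, decide_eq_true_eq] at hc hd
    rwa [update_of_ne hc.2, update_of_ne hd.2]
  · by_cases hx : x = v
    · subst hx
      simpa using fun _ => hst
    · simp [hx, h]

end List

section Run

variable {V : Type*} [DecidableEq V] (adj : V → V → Bool) (pref : V → List V)

def rdoStep (M : List (V × V)) (u : V) : List (V × V) :=
  if matchedIn M u then M
  else
    match (pref u).find? (fun v => adj u v && !matchedIn M v) with
    | some v => (u, v) :: M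
    | none => M

theorem rdoRun_cons (u : V) (l : List V) (M : List (V × V)) :
    rdoRun adj pref (u :: l) M = rdoRun adj pref l (rdoStep adj pref M u) := by
  rw [rdoRun, rdoStep]
  split <;> [rfl; split <;> rfl]

theorem rdoRun_eq_foldl (l : List V) (M : List (V × V)) :
    rdoRun adj pref l M = l.foldl (rdoStep adj pref) M := by
  induction l generalizing M with
  | nil => rfl
  | cons u l ih => rw [rdoRun_cons, ih, List.foldl_cons]

theorem rdoRun_append (l₁ l₂ : List V) (M : List (V × V)) :
    rdoRun adj pref (l₁ ++ l₂) M = rdoRun adj pref l₂ (rdoRun adj pref l₁ M) := by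
  simp only [rdoRun_eq_foldl, List.foldl_append]

theorem matchedIn_of_subset {M M' : List (V × V)} {x : V} (hM : M ⊆ M')
    (h : matchedIn M x = true) : matchedIn M' x = true := by
  simp only [matchedIn, List.any_eq_true] at h ⊢
  obtain ⟨e, he, hx⟩ := h
  exact ⟨e, hM he, hx⟩

theorem subset_rdoStep (M : List (V × V)) (u : V) : M ⊆ rdoStep adj pref M u := by
  unfold rdoStep
  split
  · exact List.Subset.refl M
  · split
    · exact List.subset_cons_self _ _
    · exact List.Subset.refl M

theorem fst_eq_of_mem_rdoStep {e : V × V} {M : List (V × V)} {u : V}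
    (he : e ∈ rdoStep adj pref M u) (heM : e ∉ M) : e.1 = u := by
  unfold rdoStep at he
  split at he
  · contradiction
  · split at he
    · rcases List.mem_cons.1 he with rfl | he
      · rfl
      · contradiction
    · contradiction

theorem rdoStep_eq_self_of_matchedIn_eq_false {M : List (V × V)} {u : V}
    (h : matchedIn (rdoStep adj pref M u) u = false) : rdoStep adj pref M u = M := by
  unfold rdoStep at h ⊢
  split_ifs at h ⊢
  · rfl
  · cases hf : (pref u).find? (fun v => adj u v && !matchedIn M v) with
    | none => rfl
    | some w => rw [hf] at h; simp [matchedIn] at h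

theorem subset_rdoRun (l : List V) (M : List (V × V)) : M ⊆ rdoRun adj pref l M := by
  induction l generalizing M with
  | nil => exact List.Subset.refl M
  | cons u l ih =>
    rw [rdoRun_cons]
    exact List.Subset.trans (subset_rdoStep adj pref M u) (ih _)

theorem fst_mem_of_mem_rdoRun {e : V × V} {l : List V} {M : List (V × V)}
    (he : e ∈ rdoRun adj pref l M) (heM : e ∉ M) : e.1 ∈ l := by
  induction l generalizing M with
  | nil => exact absurd he heM
  | cons u l ih =>
    rw [rdoRun_cons] at he
    by_cases hstep : e ∈ rdoStep adj pref M u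
    · exact List.mem_cons.2 (Or.inl (fst_eq_of_mem_rdoStep adj pref hstep heM))
    · exact List.mem_cons_of_mem _ (ih he hstep)

theorem mem_rdoRun_of_mem_rdoRun_append {e : V × V} {l₁ l₂ : List V} {M : List (V × V)}
    (he : e ∈ rdoRun adj pref (l₁ ++ l₂) M) (h₂ : e.1 ∉ l₂) : e ∈ rdoRun adj pref l₁ M := by
  rw [rdoRun_append] at he
  by_contra h
  exact h₂ (fst_mem_of_mem_rdoRun adj pref he h)

theorem rdoRun_filter_ne_of_matchedIn_eq_false {v : V} {l : List V} {M : List (V × V)}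
    (h : matchedIn (rdoRun adj pref l M) v = false) :
    rdoRun adj pref (l.filter (· ≠ v)) M = rdoRun adj pref l M := by
  induction l generalizing M with
  | nil => rfl
  | cons u l ih =>
    rw [rdoRun_cons] at h ⊢
    by_cases huv : u = v
    · subst huv
      have hstep : rdoStep adj pref M u = M :=
        rdoStep_eq_self_of_matchedIn_eq_false adj pref <| Bool.eq_false_iff.2 fun hm =>
          Bool.false_ne_true (h ▸ matchedIn_of_subset (subset_rdoRun adj pref l _) hm)
      rw [hstep] at h ⊢
      simpa using ih h
    · simpa [List.filter_cons, huv, rdoRun_cons] using ih h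

end Run

theorem stmt19_general {V : Type*} [DecidableEq V]
    (adj : V → V → Bool)
    (pref : V → List V)
    (y : V → ℝ)
    (L : List V) (hLsort : L.Pairwise (fun a b => y a < y b)) (hLall : ∀ x : V, x ∈ L)
    (v a b : V) (hmem : (a, b) ∈ rdoRun adj pref L [])
    (hunmatched : ∀ c d : V, (c, d) ∈ rdoRun adj pref L [] → (v = c ∨ v = d) → y a < y c)
    (t' : ℝ) (ht' : y a < t')
    (L' : List V) (hL'sort : L'.Pairwise (fun c d => Function.update y v t' c < Function.update y v t' d))
    (hL'all : ∀ x : V, x ∈ L') :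
    (a, b) ∈ rdoRun adj pref L' [] := by
  set P := L.filter (fun x => y x ≤ y a)
  have hsplit := hLsort.filter_le_append_filter_lt (y a)
  have hab : (a, b) ∈ rdoRun adj pref P [] :=
    mem_rdoRun_of_mem_rdoRun_append adj pref (hsplit ▸ hmem) (by simp)
  have hv : matchedIn (rdoRun adj pref P []) v = false := by
    refine Bool.eq_false_iff.2 fun hcov => ?_
    obtain ⟨⟨c, d⟩, hcd, hvcd⟩ := List.any_eq_true.1 hcov
    have hearly : y c ≤ y a := by
      simpa using (List.mem_filter.1 (fst_mem_of_mem_rdoRun adj pref hcd List.not_mem_nil)).2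
    have hcL : (c, d) ∈ rdoRun adj pref L [] := by
      rw [← hsplit, rdoRun_append]
      exact subset_rdoRun adj pref _ _ hcd
    simp only [Bool.or_eq_true, decide_eq_true_eq] at hvcd
    have hlate := hunmatched c d hcL (hvcd.imp Eq.symm Eq.symm)
    linarith
  have hP' : L'.filter (fun x => Function.update y v t' x ≤ y a) = P.filter (· ≠ v) :=
    hLsort.filter_update_le_eq hL'sort ht' fun x => by simp [hLall, hL'all]
  rw [← hL'sort.filter_le_append_filter_lt (y a), rdoRun_append, hP',
    rdoRun_filter_ne_of_matchedIn_eq_false adj pref hv]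
  exact subset_rdoRun adj pref _ _ hab

/-- In RDO with ranks `y`, suppose the edge `(a, b)` (with active
vertex `a`, hence decision time `y a`) covers `u`, while `v` is still unmatched at
that time, i.e. every matched edge covering `v` has decision time greater than `y a`.
Then changing `y v` to any value `t' > y a` yields a run in which `u` is matched to
the same partner by the same edge. -/
theorem stmt19 {V : Type*} [Fintype V] [DecidableEq V]
    (adj : V → V → Bool) (hsymm : ∀ a b : V, adj a b = adj b a)
    (pref : V → List V)
    (y : V → ℝ) (hy : Function.Injective y)
    (L : List V) (hLsort : L.Pairwise (fun a b => y a < y b)) (hLall : ∀ x : V, x ∈ L)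
    (u v a b : V) (hmem : (a, b) ∈ rdoRun adj pref L [])
    (hu : u = a ∨ u = b) (hv : v ≠ a ∧ v ≠ b)
    (hunmatched : ∀ c d : V, (c, d) ∈ rdoRun adj pref L [] → (v = c ∨ v = d) → y a < y c)
    (t' : ℝ) (ht' : y a < t')
    (hy' : Function.Injective (Function.update y v t'))
    (L' : List V) (hL'sort : L'.Pairwise (fun c d => Function.update y v t' c < Function.update y v t' d))
    (hL'all : ∀ x : V, x ∈ L') :
    (a, b) ∈ rdoRun adj pref L' [] :=
  stmt19_general adj pref y L hLsort hLall v a b hmem hunmatched t' ht' L' hL'sort hL'all
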